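/- Let G be a graph of order n. Then γ'_s(G) ≥ −n²/16. -/

import Mathlib

open scoped Classical

noncomputable def edgeFin {V : Type*} [Fintype V] (G : SimpleGraph V) : Finset (Sym2 V) :=
  Finset.univ.filter (· ∈ G.edgeSet)

noncomputable def closedNbhd {V : Type*} [Fintype V] (G : SimpleGraph V) (e : Sym2 V) :
    Finset (Sym2 V) :=
  (edgeFin G).filter (fun e' => ∃ v, v ∈ e ∧ v ∈ e')

def IsSEDF {V : Type*} [Fintype V] (G : SimpleGraph V) (f : Sym2 V → ℤ) : Prop :=
  (∀ e ∈ edgeFin G, f e = 1 ∨ f e = -1) ∧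
  ∀ e ∈ edgeFin G, 1 ≤ ∑ e' ∈ closedNbhd G e, f e'

noncomputable def vsum {V : Type*} [Fintype V] (G : SimpleGraph V) (f : Sym2 V → ℤ) (v : V) : ℤ :=
  ∑ e ∈ (edgeFin G).filter (fun e => v ∈ e), f e

noncomputable def gammaS {V : Type*} [Fintype V] (G : SimpleGraph V) : ℤ :=
  sInf {z : ℤ | ∃ f, IsSEDF G f ∧ z = ∑ e ∈ edgeFin G, f e}

def IsLGraph {V : Type*} [Fintype V] (m n : ℕ) (G : SimpleGraph V) : Prop :=
  Fintype.card V = (n + 1) * (m * n + m + 1) ∧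
  ∃ P : Fin (n + 1) → Finset V,
    (∀ v : V, ∃! i, v ∈ P i) ∧
    (∀ i, (P i).card = m * n + m + 1) ∧
    (∀ u ∈ P 0, ∀ v ∈ P 0, u ≠ v → G.Adj u v) ∧
    (∀ i, i ≠ 0 → ∀ u ∈ P i, ∀ v ∈ P i, ¬ G.Adj u v) ∧
    (∀ i, i ≠ 0 → ∀ v ∈ P i, ((P 0).filter (G.Adj v)).card = m) ∧
    (∀ i, i ≠ 0 → ∀ v ∈ P 0, ((P i).filter (G.Adj v)).card = m) ∧
    (∀ i j, i ≠ 0 → j ≠ 0 → i ≠ j → ∀ u ∈ P i, ∀ v ∈ P j, ¬ G.Adj u v)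

def MConnected {V : Type*} [Fintype V] (m : ℕ) (G : SimpleGraph V) : Prop :=
  m < Fintype.card V ∧
  ∀ S : Finset V, S.card < m → (G.induce ((↑S : Set V)ᶜ)).Connected

def IsElementary {V : Type*} (H : SimpleGraph V) : Prop :=
  (∀ v, (H.neighborSet v).ncard ≤ 2) ∧
  ∀ v, (H.neighborSet v).ncard = 1 → ∀ w, H.Adj v w → (H.neighborSet w).ncard = 1

/-! Write `f(v)` for the sum of `f` over the edges at `v`, so that `∑ᵥ f(v) = 2 f(E)`. Let `v₀`
minimise `f(v)` and put `M = -f(v₀)`, which we may take positive. The condition at an edge `v₀u`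
gives `f(u) ≥ 1 - f(v₀) + f(v₀u) ≥ M`, every vertex has `f(v) ≥ -M`, and `v₀` has degree `d ≥ M`.
Hence `2 f(E) ≥ dM - (n - d)M ≥ (2M - n)M = ((4M - n)² - n²)/8 ≥ -n²/8`. -/

section

variable {V : Type*} [Fintype V] {G : SimpleGraph V} {f : Sym2 V → ℤ}

lemma mem_edgeFin {e : Sym2 V} : e ∈ edgeFin G ↔ e ∈ G.edgeSet := by
  simp [edgeFin]

lemma filter_mem_edgeFin_eq_incidenceFinset (v : V) :
    (edgeFin G).filter (fun e => v ∈ e) = G.incidenceFinset v := by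
  ext e
  simp [edgeFin, SimpleGraph.incidenceSet]

lemma card_filter_mem_sym2 {e : Sym2 V} (h : ¬ e.IsDiag) :
    (Finset.univ.filter (· ∈ e)).card = 2 := by
  induction e with
  | _ a b =>
    rw [Sym2.mk_isDiag_iff] at h
    rw [show Finset.univ.filter (· ∈ s(a, b)) = {a, b} by ext; simp, Finset.card_pair h]

lemma sum_vsum (G : SimpleGraph V) (f : Sym2 V → ℤ) :
    ∑ v, vsum G f v = 2 * ∑ e ∈ edgeFin G, f e := by
  calc ∑ v, vsum G f v
      = ∑ v, ∑ e ∈ edgeFin G, if v ∈ e then f e else 0 := by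
        simp only [vsum, Finset.sum_filter]
    _ = ∑ e ∈ edgeFin G, ∑ v, if v ∈ e then f e else 0 := Finset.sum_comm
    _ = ∑ e ∈ edgeFin G, 2 * f e := by
        refine Finset.sum_congr rfl fun e he => ?_
        rw [← Finset.sum_filter, Finset.sum_const, nsmul_eq_mul,
          card_filter_mem_sym2 (G.not_isDiag_of_mem_edgeSet (mem_edgeFin.mp he))]
        norm_num
    _ = 2 * ∑ e ∈ edgeFin G, f e := (Finset.mul_sum ..).symm

lemma sum_closedNbhd_eq {u v : V} (huv : G.Adj u v) :
    ∑ e ∈ closedNbhd G s(u, v), f e = vsum G f u + vsum G f v - f s(u, v) := by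
  have hunion : closedNbhd G s(u, v) =
      (edgeFin G).filter (u ∈ ·) ∪ (edgeFin G).filter (v ∈ ·) := by
    rw [closedNbhd, ← Finset.filter_or]
    refine Finset.filter_congr fun e _ => ?_
    simp
  have hinter : (edgeFin G).filter (u ∈ ·) ∩ (edgeFin G).filter (v ∈ ·) = {s(u, v)} := by
    ext e
    simp only [Finset.mem_inter, Finset.mem_filter, Finset.mem_singleton]
    constructor
    · rintro ⟨⟨_, hu⟩, _, hv⟩
      exact (Sym2.mem_and_mem_iff huv.ne).mp ⟨hu, hv⟩
    · rintro rfl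
      have he : s(u, v) ∈ edgeFin G := mem_edgeFin.mpr huv
      exact ⟨⟨he, Sym2.mem_mk_left u v⟩, he, Sym2.mem_mk_right u v⟩
  have := Finset.sum_union_inter (s₁ := (edgeFin G).filter (u ∈ ·))
    (s₂ := (edgeFin G).filter (v ∈ ·)) (f := f)
  rw [← hunion, hinter, Finset.sum_singleton] at this
  rw [vsum, vsum]
  linarith

lemma neg_degree_le_vsum (hf : ∀ e ∈ edgeFin G, -1 ≤ f e) (v : V) :
    -(G.degree v : ℤ) ≤ vsum G f v := by
  rw [← G.card_incidenceFinset_eq_degree, vsum, filter_mem_edgeFin_eq_incidenceFinset]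
  have := Finset.card_nsmul_le_sum _ f (-1) fun e he =>
    hf e (mem_edgeFin.mpr ((G.mem_incidenceFinset v e).mp he).1)
  simpa using this

lemma IsSEDF.ge_neg_one (hf : IsSEDF G f) : ∀ e ∈ edgeFin G, -1 ≤ f e := fun e he => by
  rcases hf.1 e he with h | h <;> omega

lemma IsSEDF.neg_vsum_le_vsum_of_adj (hf : IsSEDF G f) {u v : V} (huv : G.Adj u v) :
    -vsum G f u ≤ vsum G f v := by
  have he : s(u, v) ∈ edgeFin G := mem_edgeFin.mpr huv
  have := hf.2 _ he
  rw [sum_closedNbhd_eq huv] at this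
  linarith [hf.ge_neg_one _ he]

lemma IsSEDF.sum_vsum_ge_of_isMin (hf : IsSEDF G f) {v₀ : V}
    (hmin : ∀ v, vsum G f v₀ ≤ vsum G f v) :
    (2 * G.degree v₀ - Fintype.card V : ℤ) * -vsum G f v₀ ≤ ∑ v, vsum G f v := by
  set M := -vsum G f v₀
  calc (2 * G.degree v₀ - Fintype.card V : ℤ) * M
      = ∑ v, if G.Adj v₀ v then M else -M := by
        rw [Finset.sum_ite, Finset.sum_const, Finset.sum_const, ← G.neighborFinset_eq_filter,
          G.card_neighborFinset_eq_degree, Finset.filter_not, Finset.card_sdiff_of_subset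
          (Finset.filter_subset _ _), ← G.neighborFinset_eq_filter,
          G.card_neighborFinset_eq_degree, Finset.card_univ,
          nsmul_eq_mul, nsmul_eq_mul, Nat.cast_sub (G.degree_lt_card_verts v₀).le]
        ring
    _ ≤ ∑ v, vsum G f v := Finset.sum_le_sum fun v _ => by
        split_ifs with hadj
        · exact hf.neg_vsum_le_vsum_of_adj hadj
        · linarith [hmin v]

lemma IsSEDF.neg_card_sq_le_sixteen_mul_sum (hf : IsSEDF G f) :
    -(Fintype.card V : ℤ) ^ 2 ≤ 16 * ∑ e ∈ edgeFin G, f e := by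
  rw [show 16 * ∑ e ∈ edgeFin G, f e = 8 * ∑ v, vsum G f v by rw [sum_vsum]; ring]
  cases isEmpty_or_nonempty V
  · simp
  obtain ⟨v₀, -, hmin⟩ := Finset.exists_min_image Finset.univ (vsum G f) Finset.univ_nonempty
  rcases le_or_gt 0 (vsum G f v₀) with hpos | hneg
  · have : 0 ≤ ∑ v, vsum G f v := Finset.sum_nonneg fun v hv => hpos.trans (hmin v hv)
    linarith [sq_nonneg (Fintype.card V : ℤ)]
  · have hdeg := neg_degree_le_vsum hf.ge_neg_one v₀
    have hsum := hf.sum_vsum_ge_of_isMin fun v => hmin v (Finset.mem_univ v)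
    nlinarith [sq_nonneg (4 * vsum G f v₀ + Fintype.card V)]

lemma isSEDF_one (G : SimpleGraph V) : IsSEDF G 1 := by
  refine ⟨fun e _ => Or.inl rfl, fun e he => ?_⟩
  have hmem : e ∈ closedNbhd G e :=
    Finset.mem_filter.mpr ⟨he, e.out.1, Sym2.out_fst_mem e, Sym2.out_fst_mem e⟩
  simpa using Finset.card_pos.mpr ⟨e, hmem⟩

end

theorem stmt8 {V : Type*} [Fintype V] (G : SimpleGraph V) :
    -((Fintype.card V : ℚ) ^ 2) / 16 ≤ (gammaS G : ℚ) := by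
  have hbound : ∀ z ∈ {z : ℤ | ∃ f, IsSEDF G f ∧ z = ∑ e ∈ edgeFin G, f e},
      ⌈-((Fintype.card V : ℚ) ^ 2) / 16⌉ ≤ z := by
    rintro z ⟨f, hf, rfl⟩
    rw [Int.ceil_le, div_le_iff₀ (by norm_num)]
    exact_mod_cast (mul_comm _ _).trans_ge hf.neg_card_sq_le_sixteen_mul_sum
  calc -((Fintype.card V : ℚ) ^ 2) / 16 ≤ ⌈-((Fintype.card V : ℚ) ^ 2) / 16⌉ := Int.le_ceil _
    _ ≤ gammaS G := Int.cast_le.mpr (le_csInf ⟨_, 1, isSEDF_one G, rfl⟩ hbound)
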